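/- arXiv:math/0612189 — 7 statements merged into one kernel-verified Lean document; each statement's English description precedes it below -/
import Mathlib

section
/- Let ω₁, ω₂ be real numbers with ω₁ ≠ 0 and ω₂/ω₁ irrational. Let s ∈ ℤ and let μ : ℤ × ℤ → ℂ satisfy μ(a+a', b+b') = μ(a,b)·μ(a',b') and |μ(a,b)| = 1 for all a, a', b, b' ∈ ℤ. Suppose Θ : ℂ → ℂ is holomorphic on all of ℂ and satisfies, for all a, b ∈ ℤ and all v ∈ ℂ, Θ(v + a·ω₁ + b·ω₂) = μ(a,b) · exp((s·π·i/ω₁)·(b²·ω₂ + 2·b·v)) · Θ(v). Then there exist A ∈ ℂ and α ∈ ℝ such that Θ(z) = A · exp(2·π·i·α·z) for all z ∈ ℂ. -/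
/-!
Since `ω₂ / ω₁` is irrational, `ℤω₁ + ℤω₂` is dense in `ℝ`, and at its points `‖Θ‖` equals
`‖Θ 0‖` because the multiplier at `v = 0` has modulus one; so `‖Θ‖` is constant on `ℝ`.
Either `Θ` then vanishes on `ℝ`, hence everywhere, or it has no zeros at all, since
`Θ z * conj (Θ (conj z))` is entire and equal to the constant `‖Θ 0‖ ^ 2` on `ℝ`.
In the second case the logarithmic derivative `f = Θ' / Θ` is entire, with `f (z + ω₁) = f z`
and `f (z + ω₂) = f z + 2πis/ω₁`. Thus `f'` is periodic under the dense group `ℤω₁ + ℤω₂`, hence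
under every real translation, hence constant, and `ω₁`-periodicity of `f` makes `f` itself
a constant `γ`. So `Θ = c * exp (γ z)`, and `‖Θ‖` being constant on `ℝ` forces `Re γ = 0`.
-/

open Real Complex Filter Function ComplexConjugate

theorem Differentiable.eq_of_ofReal_eq {f g : ℂ → ℂ} (hf : Differentiable ℂ f)
    (hg : Differentiable ℂ g) (h : ∀ x : ℝ, f x = g x) : f = g :=
  AnalyticOnNhd.eq_of_frequently_eq (fun z _ => hf.analyticAt z) (fun z _ => hg.analyticAt z)
    ((continuous_ofReal.continuousWithinAt (s := {0}ᶜ) (x := 0)).tendsto_nhdsWithin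
      (fun _ hx => ofReal_ne_zero.2 hx) |>.frequently (Frequently.of_forall h))

theorem Differentiable.apply_ne_zero_of_norm_ofReal_eq {f : ℂ → ℂ} (hf : Differentiable ℂ f)
    {c : ℝ} (hc : c ≠ 0) (h : ∀ x : ℝ, ‖f x‖ = c) (z : ℂ) : f z ≠ 0 := by
  have hprod : (fun z => f z * conj (f (conj z))) = fun _ => ((c ^ 2 : ℝ) : ℂ) := by
    refine Differentiable.eq_of_ofReal_eq
      (hf.mul fun z => differentiableAt_conj_conj_iff.2 (hf _)) (differentiable_const _)
      fun x => ?_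
    rw [conj_ofReal, mul_conj, normSq_eq_norm_sq, h]
  intro hz
  have := congrFun hprod z
  simp only [hz, zero_mul] at this
  exact hc (by simpa using this.symm)

theorem Differentiable.eq_const_mul_exp_of_logDeriv_eq {f : ℂ → ℂ} (hf : Differentiable ℂ f)
    (hne : ∀ z, f z ≠ 0) {γ : ℂ} (h : ∀ z, logDeriv f z = γ) :
    ∃ c ≠ 0, ∀ z, f z = c * cexp (γ * z) := by
  obtain ⟨c, hc0, hc⟩ := (logDeriv_eqOn_iff hf.differentiableOn (by fun_prop) isOpen_univ
    isPreconnected_univ (fun z _ => Complex.exp_ne_zero (γ * z)) fun z _ => hne z).1 fun z _ => by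
      rw [h z, logDeriv_apply, (((hasDerivAt_id' z).const_mul γ).cexp).deriv]
      field_simp
  exact ⟨c, hc0, fun z => hc (Set.mem_univ z)⟩

theorem apply_eq_of_dense_real_periods {F : ℂ → ℂ} (hF : Differentiable ℂ F)
    {S : Set ℝ} (hS : Dense S) (hper : ∀ t ∈ S, Periodic F t) (z w : ℂ) : F z = F w := by
  have htrans : ∀ z : ℂ, ∀ t : ℝ, F (z + t) = F z := fun z =>
    congrFun <| (hF.continuous.comp (continuous_const.add continuous_ofReal)).ext_on hS
      continuous_const fun t ht => hper t ht z
  refine is_const_of_deriv_eq_zero hF (fun x => ?_) z w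
  have hreal : HasDerivAt (fun t : ℝ => F (x + t)) (deriv F x) 0 := by
    simpa using ((hF (x + 0)).hasDerivAt.comp_const_add x 0).comp_ofReal
  simp only [htrans x] at hreal
  exact hreal.unique (hasDerivAt_const (0 : ℝ) (F x))

theorem deriv_periodic_of_add_const {𝕜 : Type*} [NontriviallyNormedField 𝕜] {f : 𝕜 → 𝕜}
    {p c : 𝕜} (h : ∀ z, f (z + p) = f z + c) : Periodic (deriv f) p := fun z => by
  rw [← deriv_comp_add_const, funext h, deriv_add_const]

theorem apply_eq_of_periodic_of_add_const {f : ℂ → ℂ} (hf : Differentiable ℂ f) {ω₁ ω₂ : ℝ}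
    (hirr : Irrational (ω₂ / ω₁)) {c : ℂ} (h₁ : Periodic f ω₁)
    (h₂ : ∀ z, f (z + ω₂) = f z + c) (z : ℂ) : f z = f 0 := by
  have hper : ∀ t ∈ AddSubgroup.closure {ω₂, ω₁}, Periodic (deriv f) t := by
    simp only [AddSubgroup.mem_closure_pair]
    rintro _ ⟨m, n, rfl⟩
    push_cast [zsmul_eq_mul]
    exact ((deriv_periodic_of_add_const h₂).int_mul m).add_period
      ((deriv_periodic_of_add_const (c := 0) fun z => by rw [h₁ z, add_zero]).int_mul n)
  set β := deriv f 0
  have hβ : ∀ z, deriv f z = β := fun z =>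
    apply_eq_of_dense_real_periods hf.deriv (dense_addSubgroupClosure_pair_iff.2 hirr) hper z 0
  have haffine : ∀ z, f z - β * z = f 0 := fun z => by
    have hd : ∀ x, HasDerivAt (fun z => f z - β * z) 0 x := fun x => by
      simpa [hβ] using (hf x).hasDerivAt.fun_sub ((hasDerivAt_id x).const_mul β)
    simpa using is_const_of_deriv_eq_zero (fun x => (hd x).differentiableAt)
      (fun x => (hd x).deriv) z 0
  have hβ0 : β = 0 := by
    have := haffine ω₁
    rw [show f ω₁ = f 0 by simpa using h₁ 0, sub_eq_self, mul_eq_zero] at this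
    exact this.resolve_right (ofReal_ne_zero.2 fun h => by simp [h] at hirr)
  simpa [hβ0] using haffine z

theorem logDeriv_add_eq_of_eq_mul_exp {Θ : ℂ → ℂ} (hΘ : Differentiable ℂ Θ) {p c a b z : ℂ}
    (hz : Θ z ≠ 0) (hc : c ≠ 0) (h : ∀ v, Θ (v + p) = c * cexp (a * v + b) * Θ v) :
    logDeriv Θ (z + p) = logDeriv Θ z + a := by
  have hexp : HasDerivAt (fun v => cexp (a * v + b)) (cexp (a * z + b) * a) z := by
    simpa using ((hasDerivAt_id z).const_mul a |>.add_const b).cexp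
  have hd : HasDerivAt (fun v => c * cexp (a * v + b) * Θ v)
      (c * (cexp (a * z + b) * a) * Θ z + c * cexp (a * z + b) * deriv Θ z) z :=
    (hexp.const_mul c).mul (hΘ z).hasDerivAt
  rw [logDeriv_apply, logDeriv_apply, ← deriv_comp_add_const, funext h, h z, hd.deriv]
  field_simp
  ring

theorem exists_eq_two_pi_I_mul_of_re_eq_zero {γ : ℂ} (h : γ.re = 0) :
    ∃ α : ℝ, γ = 2 * π * I * α :=
  ⟨γ.im / (2 * π), by
    nth_rw 1 [← re_add_im γ, h, ofReal_zero, zero_add]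
    push_cast
    field_simp⟩

def IsThetaFunction (ω₁ ω₂ : ℝ) (s : ℤ) (μ : ℤ × ℤ → ℂ) (Θ : ℂ → ℂ) : Prop :=
  ∀ a b : ℤ, ∀ v : ℂ,
    Θ (v + (a : ℂ) * (ω₁ : ℂ) + (b : ℂ) * (ω₂ : ℂ)) =
      μ (a, b) * cexp (((s : ℂ) * (π : ℂ) * I / (ω₁ : ℂ)) *
        ((b : ℂ) ^ 2 * (ω₂ : ℂ) + 2 * (b : ℂ) * v)) * Θ v

namespace IsThetaFunction

variable {ω₁ ω₂ : ℝ} {s : ℤ} {μ : ℤ × ℤ → ℂ} {Θ : ℂ → ℂ}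

theorem norm_ofReal_eq (hθ : IsThetaFunction ω₁ ω₂ s μ Θ) (hΘ : Continuous Θ)
    (hirr : Irrational (ω₂ / ω₁)) (hμ : ∀ a b : ℤ, ‖μ (a, b)‖ = 1) (x : ℝ) :
    ‖Θ x‖ = ‖Θ 0‖ := by
  refine congrFun ((hΘ.comp continuous_ofReal).norm.ext_on
    (dense_addSubgroupClosure_pair_iff.2 hirr) continuous_const ?_) x
  rintro _ hl
  obtain ⟨m, n, rfl⟩ := AddSubgroup.mem_closure_pair.1 hl
  have hlat : ((m • ω₂ + n • ω₁ : ℝ) : ℂ) = 0 + n * ω₁ + m * ω₂ := by push_cast; ring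
  simp only [comp_apply]
  rw [hlat, hθ n m 0]
  simp [hμ, norm_exp, sq]

theorem logDeriv_add_ω₁ (hθ : IsThetaFunction ω₁ ω₂ s μ Θ) (hΘ : Differentiable ℂ Θ)
    (hμ : μ (1, 0) ≠ 0) {z : ℂ} (hz : Θ z ≠ 0) : logDeriv Θ (z + ω₁) = logDeriv Θ z := by
  simpa using logDeriv_add_eq_of_eq_mul_exp hΘ hz hμ (a := 0) (b := 0)
    fun v => by simpa using hθ 1 0 v

theorem logDeriv_add_ω₂ (hθ : IsThetaFunction ω₁ ω₂ s μ Θ) (hΘ : Differentiable ℂ Θ)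
    (hμ : μ (0, 1) ≠ 0) {z : ℂ} (hz : Θ z ≠ 0) :
    logDeriv Θ (z + ω₂) = logDeriv Θ z + 2 * (s * π * I / ω₁) :=
  logDeriv_add_eq_of_eq_mul_exp hΘ hz hμ (b := s * π * I / ω₁ * ω₂) fun v => by
    convert hθ 0 1 v using 4 <;> push_cast <;> ring

end IsThetaFunction

theorem no_nontrivial_holomorphic_theta_general
    (ω₁ ω₂ : ℝ) (hirr : Irrational (ω₂ / ω₁))
    (s : ℤ) (μ : ℤ × ℤ → ℂ)
    (hμabs : ∀ a b : ℤ, ‖μ (a, b)‖ = 1)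
    (Θ : ℂ → ℂ) (hΘ : Differentiable ℂ Θ)
    (hper : ∀ a b : ℤ, ∀ v : ℂ,
      Θ (v + (a : ℂ) * (ω₁ : ℂ) + (b : ℂ) * (ω₂ : ℂ)) =
        μ (a, b) *
          Complex.exp (((s : ℂ) * (π : ℂ) * Complex.I / (ω₁ : ℂ)) *
            ((b : ℂ) ^ 2 * (ω₂ : ℂ) + 2 * (b : ℂ) * v)) * Θ v) :
    ∃ (A : ℂ) (α : ℝ), ∀ z : ℂ,
      Θ z = A * Complex.exp (2 * (π : ℂ) * Complex.I * (α : ℂ) * z) := by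
  have hθ : IsThetaFunction ω₁ ω₂ s μ Θ := hper
  have hnorm := hθ.norm_ofReal_eq hΘ.continuous hirr hμabs
  rcases eq_or_ne (Θ 0) 0 with h0 | h0
  · refine ⟨0, 0, fun z => ?_⟩
    rw [hΘ.eq_of_ofReal_eq (differentiable_const 0) fun x => by simpa [h0] using hnorm x]
    simp
  have hne := hΘ.apply_ne_zero_of_norm_ofReal_eq (norm_ne_zero_iff.2 h0) hnorm
  have hμ0 : ∀ a b, μ (a, b) ≠ 0 := fun a b => norm_ne_zero_iff.1 (by simp [hμabs])
  have hγ : ∀ z, logDeriv Θ z = logDeriv Θ 0 :=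
    apply_eq_of_periodic_of_add_const (hΘ.deriv.div hΘ hne) hirr
      (fun z => hθ.logDeriv_add_ω₁ hΘ (hμ0 1 0) (hne z))
      (fun z => hθ.logDeriv_add_ω₂ hΘ (hμ0 0 1) (hne z))
  obtain ⟨c, hc0, hc⟩ := hΘ.eq_const_mul_exp_of_logDeriv_eq hne hγ
  obtain ⟨α, hα⟩ := exists_eq_two_pi_I_mul_of_re_eq_zero (γ := logDeriv Θ 0)
    (by simpa [hc, norm_exp, hc0] using hnorm 1)
  exact ⟨c, α, fun z => by rw [hc, hα]⟩

/-- Proposition 2.1: there are no nontrivial holomorphic theta functions for a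
pseudolattice `L = ℤω₁ + ℤω₂`. -/
theorem no_nontrivial_holomorphic_theta
    (ω₁ ω₂ : ℝ) (hω₁ : ω₁ ≠ 0) (hirr : Irrational (ω₂ / ω₁))
    (s : ℤ) (μ : ℤ × ℤ → ℂ)
    (hμmul : ∀ a a' b b' : ℤ, μ (a + a', b + b') = μ (a, b) * μ (a', b'))
    (hμabs : ∀ a b : ℤ, ‖μ (a, b)‖ = 1)
    (Θ : ℂ → ℂ) (hΘ : Differentiable ℂ Θ)
    (hper : ∀ a b : ℤ, ∀ v : ℂ,
      Θ (v + (a : ℂ) * (ω₁ : ℂ) + (b : ℂ) * (ω₂ : ℂ)) =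
        μ (a, b) *
          Complex.exp (((s : ℂ) * (π : ℂ) * Complex.I / (ω₁ : ℂ)) *
            ((b : ℂ) ^ 2 * (ω₂ : ℂ) + 2 * (b : ℂ) * v)) * Θ v) :
    ∃ (A : ℂ) (α : ℝ), ∀ z : ℂ,
      Θ z = A * Complex.exp (2 * (π : ℂ) * Complex.I * (α : ℂ) * z) :=
  no_nontrivial_holomorphic_theta_general ω₁ ω₂ hirr s μ hμabs Θ hΘ hper
end

section
/- Let ω₁, ω₂ be real numbers with ω₁ ≠ 0 and ω₂/ω₁ irrational. Let f : ℂ → ℂ be holomorphic on all of ℂ, and suppose that for every a, b ∈ ℤ there exists a holomorphic function A : ℂ → ℂ with A(v) ≠ 0 for all v ∈ ℂ and f(v + a·ω₁ + b·ω₂) = A(v)·f(v) for all v ∈ ℂ. If f(z₀) = 0 for some z₀ ∈ ℂ, then f is identically zero. -/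
open Real Complex

/-- First step of the proof of Proposition 2.1: an entire theta function for a
pseudolattice which has a zero vanishes identically. -/
theorem theta_with_zero_is_zero
    (ω₁ ω₂ : ℝ) (hω₁ : ω₁ ≠ 0) (hirr : Irrational (ω₂ / ω₁))
    (f : ℂ → ℂ) (hf : Differentiable ℂ f)
    (hper : ∀ a b : ℤ, ∃ A : ℂ → ℂ, Differentiable ℂ A ∧ (∀ v : ℂ, A v ≠ 0) ∧
      ∀ v : ℂ, f (v + (a : ℂ) * (ω₁ : ℂ) + (b : ℂ) * (ω₂ : ℂ)) = A v * f v)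
    (z₀ : ℂ) (hz₀ : f z₀ = 0) :
    ∀ z : ℂ, f z = 0 := by
  -- the pseudolattice
  set L : AddSubgroup ℝ := AddSubgroup.closure {ω₁, ω₂} with hL
  -- L is dense
  have hdense : Dense (L : Set ℝ) := by
    rcases L.dense_or_cyclic with h | ⟨g, hg⟩
    · exact h
    · exfalso
      have h1 : ω₁ ∈ L := AddSubgroup.subset_closure (by simp)
      have h2 : ω₂ ∈ L := AddSubgroup.subset_closure (by simp)
      rw [hg, AddSubgroup.mem_closure_singleton] at h1 h2
      obtain ⟨m, hm⟩ := h1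
      obtain ⟨n, hn⟩ := h2
      have hg0 : g ≠ 0 := by rintro rfl; simp at hm; exact hω₁ hm.symm
      have hm0 : m ≠ 0 := by rintro rfl; simp at hm; exact hω₁ hm.symm
      have hmR : (m : ℝ) ≠ 0 := Int.cast_ne_zero.mpr hm0
      apply hirr
      refine ⟨(n : ℚ) / (m : ℚ), ?_⟩
      rw [← hm, ← hn]
      push_cast
      field_simp [zsmul_eq_mul, hmR]
      ring
  -- zeros of f at z₀ + t for t ∈ L
  have hzero : ∀ t : ℝ, t ∈ L → f (z₀ + (t : ℂ)) = 0 := by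
    intro t ht
    rw [AddSubgroup.mem_closure_pair] at ht
    obtain ⟨a, b, hab⟩ := ht
    obtain ⟨A, _, _, hA⟩ := hper a b
    have := hA z₀
    rw [hz₀, mul_zero] at this
    rw [← this]
    congr 1
    rw [← hab]
    push_cast [zsmul_eq_mul]
    ring
  -- frequently zero near z₀
  have hfreq : ∃ᶠ z in nhdsWithin z₀ {z₀}ᶜ, f z = 0 := by
    rw [(Metric.nhdsWithin_basis_ball.frequently_iff)]
    intro ε hε
    -- find t ∈ L with 0 < t < ε
    obtain ⟨t, ht, htd⟩ := Metric.dense_iff.mp hdense (ε / 2) (ε / 2) (half_pos hε)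
    obtain ⟨ht0, htε⟩ : 0 < t ∧ t < ε := by
      rw [Metric.mem_ball, Real.dist_eq, abs_lt] at ht
      constructor <;> linarith
    refine ⟨z₀ + (t : ℂ), ⟨?_, ?_⟩, hzero t htd⟩
    · rw [Metric.mem_ball, dist_eq_norm]
      simp only [add_sub_cancel_left]
      rw [Complex.norm_real, Real.norm_eq_abs, abs_of_pos ht0]
      exact htε
    · simp only [Set.mem_compl_iff, Set.mem_singleton_iff]
      intro h
      have : (t : ℂ) = 0 := by linear_combination h
      exact ht0.ne' (by exact_mod_cast this)
  -- identity theorem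
  have han : AnalyticOnNhd ℂ f Set.univ := by
    rw [analyticOnNhd_univ_iff_differentiable]; exact hf
  intro z
  exact han.eqOn_zero_of_preconnected_of_frequently_eq_zero isPreconnected_univ
    (Set.mem_univ z₀) hfreq (Set.mem_univ z)
end

section
/- Let Θ : ℂ → ℂ be holomorphic on all of ℂ with Θ(v) ≠ 0 for every v ∈ ℂ, and suppose that |Θ(v + r)| = |Θ(v)| for all v ∈ ℂ and all r ∈ ℝ. Then there exist A ∈ ℂ and β ∈ ℝ such that Θ(z) = A·exp(i·β·z) for all z ∈ ℂ. -/
/-!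
For each real `r`, the quotient `Θ (z + r) / Θ z` is entire of modulus one, hence constant by
Liouville, which gives `Θ (z + r) Θ 0 = Θ r Θ z`. Differentiating in `r` at `0` yields
`Θ' = c Θ` with `c = Θ' 0 / Θ 0`, so `Θ z = Θ 0 exp (c z)`, and `|exp c| = |Θ 1| / |Θ 0| = 1`
forces `Re c = 0`.
-/

open Real Complex

theorem Complex.I_mul_im_eq_of_norm_exp_eq_one {c : ℂ} (h : ‖exp c‖ = 1) : I * c.im = c := by
  have hre : c.re = 0 := by rwa [norm_exp, Real.exp_eq_one_iff] at h
  apply Complex.ext <;> simp [hre]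

section

variable {f g : ℂ → ℂ}

theorem mul_apply_zero_eq_of_norm_le (hf : Differentiable ℂ f) (hg : Differentiable ℂ g)
    (hf0 : ∀ z, f z ≠ 0) (hle : ∀ z, ‖g z‖ ≤ ‖f z‖) (z : ℂ) : g z * f 0 = g 0 * f z := by
  have hbdd : Bornology.IsBounded (Set.range (g / f)) := by
    refine (Metric.isBounded_closedBall (x := 0) (r := 1)).subset ?_
    rintro _ ⟨w, rfl⟩
    simpa [norm_div, div_le_one (norm_pos_iff.mpr (hf0 w))] using hle w
  have hconst := (hg.div hf hf0).apply_eq_apply_of_bounded hbdd z 0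
  exact (div_eq_div_iff (hf0 z) (hf0 0)).mp hconst

theorem deriv_mul_apply_zero_eq_of_ofReal_shift (hf : Differentiable ℂ f)
    (hshift : ∀ z (r : ℝ), f (z + r) * f 0 = f r * f z) (z : ℂ) :
    deriv f z * f 0 = deriv f 0 * f z := by
  have hleft : HasDerivAt (fun r : ℝ ↦ f (z + r) * f 0) (deriv f z * f 0) 0 := by
    have : HasDerivAt (fun w ↦ f (z + w)) (deriv f z) 0 := by
      simpa using (hf (z + 0)).hasDerivAt.comp_const_add z 0
    exact this.comp_ofReal.mul_const _
  have hright : HasDerivAt (fun r : ℝ ↦ f r * f z) (deriv f 0 * f z) 0 :=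
    (hf 0).hasDerivAt.comp_ofReal.mul_const _
  exact hleft.unique (by simpa only [hshift] using hright)

theorem eq_apply_zero_mul_exp_of_deriv_eq (hf : Differentiable ℂ f) {c : ℂ}
    (hc : ∀ z, deriv f z = c * f z) (z : ℂ) : f z = f 0 * exp (c * z) := by
  have hexp : ∀ w, HasDerivAt (fun u ↦ exp (-(c * u))) (-(exp (-(c * w)) * c)) w := fun w ↦ by
    simpa using ((hasDerivAt_id w).const_mul c).neg.cexp
  have hderiv : ∀ w, deriv (fun u ↦ f u * exp (-(c * u))) w = 0 := fun w ↦ by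
    rw [((hf w).hasDerivAt.fun_mul (hexp w)).deriv, hc w]
    ring
  have hconst := is_const_of_deriv_eq_zero (hf.fun_mul fun w ↦ (hexp w).differentiableAt) hderiv z 0
  simp only [mul_zero, neg_zero, Complex.exp_zero, mul_one] at hconst
  rw [← hconst, mul_assoc, ← Complex.exp_add, neg_add_cancel, Complex.exp_zero, mul_one]

end

/-- Key analytic step of Proposition 2.1: a nonvanishing entire function whose
modulus is invariant under all real translations is a multiple of an
exponential with purely imaginary linear exponent. -/
theorem nonvanishing_real_translation_invariant_modulus
    (Θ : ℂ → ℂ) (hΘ : Differentiable ℂ Θ) (hne : ∀ v : ℂ, Θ v ≠ 0)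
    (hmod : ∀ v : ℂ, ∀ r : ℝ, ‖Θ (v + (r : ℂ))‖ = ‖Θ v‖) :
    ∃ (A : ℂ) (β : ℝ), ∀ z : ℂ, Θ z = A * Complex.exp (Complex.I * (β : ℂ) * z) := by
  have hshift : ∀ z (r : ℝ), Θ (z + r) * Θ 0 = Θ r * Θ z := fun z r ↦ by
    simpa using mul_apply_zero_eq_of_norm_le hΘ (hΘ.comp (differentiable_id.add_const _)) hne
      (fun v ↦ (hmod v r).le) z
  set c := deriv Θ 0 / Θ 0
  have hc : ∀ z, deriv Θ z = c * Θ z := fun z ↦ by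
    rw [div_mul_eq_mul_div, eq_div_iff (hne 0),
      ← deriv_mul_apply_zero_eq_of_ofReal_shift hΘ hshift z]
  have hsol := eq_apply_zero_mul_exp_of_deriv_eq hΘ hc
  have hc_norm : ‖exp c‖ = 1 := by
    have h1 := hmod 0 1
    rw [zero_add, hsol, norm_mul, ofReal_one, mul_one] at h1
    exact (mul_eq_left₀ (norm_ne_zero_iff.mpr (hne 0))).mp h1
  refine ⟨Θ 0, c.im, fun z ↦ ?_⟩
  rw [hsol z, I_mul_im_eq_of_norm_exp_eq_one hc_norm]
end

section
/- Let a₁, a₂, x₁, x₂ be positive real numbers and let s ∈ ℂ with Re(s) > 1. Then the family indexed by (m,n) ∈ ℕ × ℕ whose (m,n)-term is (x₁ + m + (x₂ + n)·a₁)^{−s} · (x₁ + m + (x₂ + n)·a₂)^{−s} is absolutely summable; here for a positive real w, w^{−s} denotes exp(−s·log w). -/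
open Real Complex

/- Since `‖exp (-s log w)‖ = w ^ (-Re s)` decreases in `w`, the `(m, n)`-term is bounded by
`(m + x₁) ^ (-σ) · (a₂ (n + x₂)) ^ (-σ)` with `σ = Re s > 1`, using `w₁ ≥ x₁ + m` and
`w₂ ≥ a₂ (x₂ + n)`. This majorant is a product of two convergent one-variable `p`-series. -/

lemma norm_cexp_neg_mul_log {w : ℝ} (hw : 0 < w) (s : ℂ) :
    ‖Complex.exp (-s * (Real.log w : ℂ))‖ = w ^ (-s.re) := by
  rw [Complex.norm_exp, Real.rpow_def_of_pos hw]
  simp only [neg_mul, neg_re, mul_re, ofReal_re, ofReal_im, mul_zero, sub_zero]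
  ring_nf

lemma norm_cexp_neg_mul_log_le {s : ℂ} (hs : 0 ≤ s.re) {u w : ℝ} (hu : 0 < u) (huw : u ≤ w) :
    ‖Complex.exp (-s * (Real.log w : ℂ))‖ ≤ u ^ (-s.re) := by
  rw [norm_cexp_neg_mul_log (hu.trans_le huw)]
  exact Real.rpow_le_rpow_of_nonpos hu huw (neg_nonpos.2 hs)

lemma summable_nat_add_rpow_neg {x σ : ℝ} (hx : 0 ≤ x) (hσ : 1 < σ) :
    Summable fun n : ℕ => ((n : ℝ) + x) ^ (-σ) := by
  refine ((Real.summable_one_div_nat_add_rpow x σ).2 hσ).congr fun n => ?_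
  have hn : 0 ≤ (n : ℝ) + x := by positivity
  rw [abs_of_nonneg hn, Real.rpow_neg hn, one_div]

lemma summable_mul_nat_add_rpow_neg {a x σ : ℝ} (ha : 0 ≤ a) (hx : 0 ≤ x) (hσ : 1 < σ) :
    Summable fun n : ℕ => (a * ((n : ℝ) + x)) ^ (-σ) := by
  refine ((summable_nat_add_rpow_neg hx hσ).mul_left (a ^ (-σ))).congr fun n => ?_
  rw [Real.mul_rpow ha (by positivity)]

/-- Absolute convergence of the defining double series of the Shintani
L-function `ζ(s, (a₁,a₂), (x₁,x₂))` for `Re(s) > 1`. -/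
theorem shintani_L_abs_summable
    (a₁ a₂ x₁ x₂ : ℝ) (ha₁ : 0 < a₁) (ha₂ : 0 < a₂) (hx₁ : 0 < x₁) (hx₂ : 0 < x₂)
    (s : ℂ) (hs : 1 < s.re) :
    Summable (fun p : ℕ × ℕ =>
      ‖Complex.exp (-s * (Real.log (x₁ + p.1 + (x₂ + p.2) * a₁) : ℂ)) *
        Complex.exp (-s * (Real.log (x₁ + p.1 + (x₂ + p.2) * a₂) : ℂ))‖) := by
  have hσ : 0 ≤ s.re := by linarith
  have majorant := (summable_nat_add_rpow_neg hx₁.le hs).mul_of_nonneg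
    (summable_mul_nat_add_rpow_neg ha₂.le hx₂.le hs) (fun _ => by positivity)
    (fun _ => by positivity)
  refine majorant.of_nonneg_of_le (fun _ => norm_nonneg _) fun ⟨m, n⟩ => ?_
  have hm : (m : ℝ) + x₁ ≤ x₁ + m + (x₂ + n) * a₁ := by nlinarith [n.cast_nonneg (α := ℝ)]
  have hn : a₂ * ((n : ℝ) + x₂) ≤ x₁ + m + (x₂ + n) * a₂ := by nlinarith [m.cast_nonneg (α := ℝ)]
  rw [norm_mul]
  exact mul_le_mul (norm_cexp_neg_mul_log_le hσ (by positivity) hm)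
    (norm_cexp_neg_mul_log_le hσ (by positivity) hn) (norm_nonneg _) (by positivity)
end

section
/- Let m, r ∈ ℕ. Then ∫_0^1 u^m·((log u + 2πi)^r − (log u)^r) du = Σ_{k=0}^{r−1} (−1)^k · (r!/(r−k)!) · (2πi)^{r−k} / (m+1)^{k+1}, where log u denotes the real logarithm, the integrand is complex-valued, and the integral is an (improper) integral over the real interval (0,1). -/
open Real Complex MeasureTheory Finset

/-!
Expanding `(log u + 2πi)^r - (log u)^r` binomially reduces the integral to the moments
`∫₀¹ u^m (log u)^k du`. The substitution `u = e^{-t}` turns each of these into the Gamma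
integral `(-1)^k ∫₀^∞ t^k e^{-(m+1)t} dt = (-1)^k k! / (m+1)^(k+1)`, and
`(r choose k) k! = r!/(r-k)!`.
-/

theorem image_exp_neg_Ioi_zero : (fun t : ℝ => Real.exp (-t)) '' Set.Ioi 0 = Set.Ioo 0 1 := by
  rw [show (fun t : ℝ => Real.exp (-t)) = Real.exp ∘ Neg.neg from rfl, Set.image_comp,
    Set.image_neg_Ioi, neg_zero, Real.image_exp_Iio, Real.exp_zero]

theorem hasDerivWithinAt_exp_neg (s : Set ℝ) (t : ℝ) :
    HasDerivWithinAt (fun t : ℝ => Real.exp (-t)) (-Real.exp (-t)) s t := by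
  simpa using (hasDerivAt_neg t).exp.hasDerivWithinAt

section
variable {E : Type*} [NormedAddCommGroup E] [NormedSpace ℝ E]

theorem integrableOn_Ioo_zero_one_iff_comp_exp_neg (g : ℝ → E) :
    IntegrableOn g (Set.Ioo 0 1) ↔
      IntegrableOn (fun t => Real.exp (-t) • g (Real.exp (-t))) (Set.Ioi 0) := by
  rw [← image_exp_neg_Ioi_zero, integrableOn_image_iff_integrableOn_abs_deriv_smul
    measurableSet_Ioi (fun t _ => hasDerivWithinAt_exp_neg _ t)
    (fun _ _ _ _ h => neg_injective (Real.exp_injective h))]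
  simp [abs_of_pos (Real.exp_pos _)]

theorem integral_Ioo_zero_one_eq_integral_comp_exp_neg (g : ℝ → E) :
    ∫ x in Set.Ioo 0 1, g x = ∫ t in Set.Ioi 0, Real.exp (-t) • g (Real.exp (-t)) := by
  rw [← image_exp_neg_Ioi_zero, integral_image_eq_integral_abs_deriv_smul
    measurableSet_Ioi (fun t _ => hasDerivWithinAt_exp_neg _ t)
    (fun _ _ _ _ h => neg_injective (Real.exp_injective h))]
  simp [abs_of_pos (Real.exp_pos _)]
end

theorem exp_neg_smul_rpow_mul_log_pow (a t : ℝ) (j : ℕ) :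
    Real.exp (-t) • (Real.exp (-t) ^ a * Real.log (Real.exp (-t)) ^ j)
      = (-1) ^ j * (t ^ j * Real.exp (-((a + 1) * t))) := by
  rw [← Real.exp_mul, Real.log_exp, smul_eq_mul, neg_pow]
  have : Real.exp (-t) * Real.exp (-t * a) = Real.exp (-((a + 1) * t)) := by
    rw [← Real.exp_add]; ring_nf
  linear_combination (-1) ^ j * t ^ j * this

theorem integral_pow_mul_exp_neg_mul_Ioi (j : ℕ) {b : ℝ} (hb : 0 < b) :
    ∫ t in Set.Ioi 0, t ^ j * Real.exp (-(b * t)) = j.factorial / b ^ (j + 1) := by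
  have h := Real.integral_rpow_mul_exp_neg_mul_Ioi (a := j + 1) (by positivity) hb
  rw [add_sub_cancel_right, Real.Gamma_nat_eq_factorial] at h
  simp_rw [Real.rpow_natCast] at h
  rw [h, ← Nat.cast_add_one, Real.rpow_natCast, one_div_pow]
  ring

theorem integrableOn_rpow_mul_log_pow {a : ℝ} (ha : -1 < a) (j : ℕ) :
    IntegrableOn (fun x : ℝ => x ^ a * Real.log x ^ j) (Set.Ioc 0 1) := by
  rw [integrableOn_Ioc_iff_integrableOn_Ioo, integrableOn_Ioo_zero_one_iff_comp_exp_neg]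
  simp_rw [exp_neg_smul_rpow_mul_log_pow]
  have := integrableOn_rpow_mul_exp_neg_mul_rpow (p := 1) (s := j) (b := a + 1)
    (neg_one_lt_zero.trans_le j.cast_nonneg) one_pos (by linarith)
  simp only [Real.rpow_natCast, Real.rpow_one, neg_mul] at this
  exact this.const_mul _

theorem integral_rpow_mul_log_pow {a : ℝ} (ha : -1 < a) (j : ℕ) :
    ∫ x in Set.Ioc 0 1, x ^ a * Real.log x ^ j = (-1) ^ j * j.factorial / (a + 1) ^ (j + 1) := by
  rw [integral_Ioc_eq_integral_Ioo, integral_Ioo_zero_one_eq_integral_comp_exp_neg]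
  simp_rw [exp_neg_smul_rpow_mul_log_pow]
  rw [integral_const_mul, integral_pow_mul_exp_neg_mul_Ioi j (by linarith), mul_div_assoc]

theorem integrableOn_ofReal_pow_mul_log_pow (m k : ℕ) :
    IntegrableOn (fun u : ℝ => (u : ℂ) ^ m * (Real.log u : ℂ) ^ k) (Set.Ioc (0:ℝ) 1) := by
  have h := (integrableOn_rpow_mul_log_pow (a := m)
    (neg_one_lt_zero.trans_le m.cast_nonneg) k).ofReal (𝕜 := ℂ)
  simp only [Real.rpow_natCast, RCLike.ofReal_mul, RCLike.ofReal_pow, Complex.coe_algebraMap] at h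
  exact h

theorem integral_ofReal_pow_mul_log_pow (m k : ℕ) :
    ∫ u in Set.Ioc (0:ℝ) 1, (u : ℂ) ^ m * (Real.log u : ℂ) ^ k
      = (-1) ^ k * k.factorial / ((m : ℂ) + 1) ^ (k + 1) := by
  have h := congrArg ((↑) : ℝ → ℂ)
    (integral_rpow_mul_log_pow (a := m) (neg_one_lt_zero.trans_le m.cast_nonneg) k)
  rw [← integral_complex_ofReal] at h
  simpa only [Real.rpow_natCast, Complex.ofReal_mul, Complex.ofReal_pow, Complex.ofReal_div,
    Complex.ofReal_neg, Complex.ofReal_one, Complex.ofReal_add, Complex.ofReal_natCast] using h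

theorem add_pow_sub_pow {R : Type*} [CommRing R] (x y : R) (n : ℕ) :
    (x + y) ^ n - x ^ n = ∑ k ∈ range n, x ^ k * y ^ (n - k) * n.choose k := by
  rw [add_pow, sum_range_succ, Nat.sub_self, Nat.choose_self, pow_zero, Nat.cast_one, mul_one,
    mul_one, add_sub_cancel_right]

theorem choose_mul_factorial_eq_factorial_div {K : Type*} [Field K] [CharZero K] {n k : ℕ}
    (hk : k ≤ n) : (n.choose k : K) * k.factorial = n.factorial / (n - k).factorial := by
  rw [Nat.cast_choose K hk]
  field_simp [Nat.factorial_ne_zero]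

/-- The case `m ≠ -1` of Appendix Lemma 8.3: the keyhole contour integral of
`u^m log(u)^r` reduces to the difference of the two straight-line pieces, with
value `Σ_{k=0}^{r-1} (-1)^k (r!/(r-k)!) (2πi)^{r-k}/(m+1)^{k+1}`. -/
theorem keyhole_integral_pow_mul_log_pow (m r : ℕ) :
    ∫ u in Set.Ioc (0:ℝ) 1,
        (u : ℂ) ^ m * (((Real.log u : ℂ) + 2 * (π : ℂ) * Complex.I) ^ r -
          ((Real.log u : ℂ)) ^ r) =
      ∑ k ∈ Finset.range r,
        (-1) ^ k * ((r.factorial : ℂ) / ((r - k).factorial : ℂ)) *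
          (2 * (π : ℂ) * Complex.I) ^ (r - k) / ((m : ℂ) + 1) ^ (k + 1) := by
  set c : ℂ := 2 * (π : ℂ) * Complex.I
  have expand (u : ℝ) : (u : ℂ) ^ m * (((Real.log u : ℂ) + c) ^ r - (Real.log u : ℂ) ^ r)
      = ∑ k ∈ range r, r.choose k * c ^ (r - k) * ((u : ℂ) ^ m * (Real.log u : ℂ) ^ k) := by
    rw [add_pow_sub_pow, mul_sum]
    exact sum_congr rfl fun k _ => by ring
  simp_rw [expand]
  rw [integral_finsetSum _ fun k _ => (integrableOn_ofReal_pow_mul_log_pow m k).const_mul _]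
  refine sum_congr rfl fun k hk => ?_
  rw [integral_const_mul, integral_ofReal_pow_mul_log_pow,
    ← choose_mul_factorial_eq_factorial_div (mem_range.1 hk).le]
  ring
end

section
/- Let r ∈ ℕ, let a₁, a₂ be real numbers with 0 < a₂ < a₁, and let T be a real number with 0 < T ≤ 1. Then ∫_0^T (log u)^r / (a₁ + a₂·u) du = (1/a₂) · Σ_{i=0}^{r} (−1)^{i+1} · (r!/(r−i)!) · (log T)^{r−i} · Σ_{n=1}^∞ (−a₂·T/a₁)^n / n^{i+1}, where log denotes the real logarithm and the integral is an (improper) integral over the real interval (0,T). -/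
/-!
Expand `1 / (a₁ + a₂ u) = ∑ₙ (-a₂ / a₁)ⁿ uⁿ / a₁`; on `(0, T]` the terms are dominated by
`(a₂ / a₁)ⁿ |log u|ʳ / a₁`, so the series may be integrated term by term. Repeated integration by
parts gives `∫₀ᵀ uⁿ logʳ u du = T^(n+1) ∑ᵢ (-1)ⁱ r!/(r-i)! log^(r-i) T / (n+1)^(i+1)`, and exchanging
the finite sum over `i` with the series over `n` yields the polylogarithms `Li_{i+1}(-a₂ T / a₁)`.
-/

open Real MeasureTheory Finset Filter Set Topology
open scoped Nat

noncomputable def logMomentPoly (m : ℝ) (r : ℕ) (x : ℝ) : ℝ :=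
  ∑ i ∈ range (r + 1), (-1) ^ i * ((r ! : ℝ) / (r - i)!) * x ^ (r - i) / m ^ (i + 1)

lemma logMomentPoly_zero (m x : ℝ) : logMomentPoly m 0 x = 1 / m := by
  simp [logMomentPoly]

lemma logMomentPoly_succ {m : ℝ} (hm : m ≠ 0) (r : ℕ) (x : ℝ) :
    logMomentPoly m (r + 1) x = (x ^ (r + 1) - (r + 1) * logMomentPoly m r x) / m := by
  rw [logMomentPoly, sum_range_succ', logMomentPoly, mul_sum, sub_eq_neg_add, add_div, neg_div,
    sum_div, ← sum_neg_distrib]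
  congr 1
  · refine sum_congr rfl fun i _ => ?_
    rw [Nat.succ_sub_succ, Nat.factorial_succ, Nat.cast_mul]
    field_simp
    push_cast
    ring
  · simp [Nat.factorial_ne_zero]

/-- The exponent `r / (r + 1) < 1` keeps the majorant integrable at `0` and makes
`u * |log u| ^ r` tend to `0`. -/
lemma abs_log_pow_le_rpow {x : ℝ} (r : ℕ) (hx0 : 0 < x) (hx1 : x ≤ 1) :
    |log x| ^ r ≤ ((r : ℝ) + 1) ^ r * x ^ (-(r / (r + 1)) : ℝ) := by
  set t : ℝ := 1 / (r + 1)
  have ht : 0 < t := by positivity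
  have hlog : |log x| ≤ (r + 1) * x ^ (-t) := by
    have h := abs_log_mul_self_rpow_lt x t hx0 hx1 ht
    rw [abs_mul, abs_of_pos (rpow_pos_of_pos hx0 t), ← lt_div_iff₀ (rpow_pos_of_pos hx0 t),
      one_div_one_div, div_eq_mul_inv, ← rpow_neg hx0.le] at h
    exact h.le
  calc |log x| ^ r ≤ ((r + 1) * x ^ (-t)) ^ r := by gcongr
    _ = ((r : ℝ) + 1) ^ r * x ^ (-(r / (r + 1)) : ℝ) := by
      rw [mul_pow, ← rpow_mul_natCast hx0.le]
      congr 2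
      simp only [t]
      field_simp

lemma integrableOn_pow_mul_log_pow (n r : ℕ) {T : ℝ} (hT1 : T ≤ 1) :
    IntegrableOn (fun u => u ^ n * log u ^ r) (Ioc 0 T) := by
  rcases le_or_gt T 0 with hT | hT
  · simp [Ioc_eq_empty_of_le hT]
  have hmaj : IntegrableOn (fun u : ℝ => ((r : ℝ) + 1) ^ r * u ^ (-(r / (r + 1)) : ℝ)) (Ioc 0 T) := by
    refine (intervalIntegrable_iff_integrableOn_Ioc_of_le hT.le).1 ?_
    refine (intervalIntegral.intervalIntegrable_rpow' ?_).const_mul _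
    rw [neg_lt_neg_iff, div_lt_one (by positivity)]
    linarith
  refine hmaj.mono' (by fun_prop) ((ae_restrict_iff' measurableSet_Ioc).2 (.of_forall ?_))
  rintro u ⟨hu0, huT⟩
  have hu1 : u ≤ 1 := huT.trans hT1
  calc ‖u ^ n * log u ^ r‖ ≤ |log u| ^ r := by
        rw [norm_mul, norm_pow, norm_pow, Real.norm_of_nonneg hu0.le, Real.norm_eq_abs]
        exact mul_le_of_le_one_left (by positivity) (pow_le_one₀ hu0.le hu1)
    _ ≤ _ := abs_log_pow_le_rpow r hu0 hu1

lemma tendsto_pow_succ_mul_log_pow_nhdsGT_zero (n r : ℕ) :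
    Tendsto (fun u => u ^ (n + 1) * log u ^ r) (𝓝[>] 0) (𝓝 0) := by
  have hexp : 0 < 1 - (r / (r + 1) : ℝ) := by
    rw [sub_pos, div_lt_one (by positivity)]; linarith
  have hmaj : Tendsto (fun u : ℝ => ((r : ℝ) + 1) ^ r * u ^ (1 - (r / (r + 1)) : ℝ))
      (𝓝[>] 0) (𝓝 0) := by
    have := ((continuousAt_rpow_const 0 _ (.inr hexp.le)).tendsto.mono_left
      (nhdsWithin_le_nhds (s := Ioi 0))).const_mul (((r : ℝ) + 1) ^ r)
    simpa [zero_rpow hexp.ne'] using this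
  refine squeeze_zero_norm' ?_ hmaj
  filter_upwards [Ioc_mem_nhdsGT zero_lt_one] with u ⟨hu0, hu1⟩
  calc ‖u ^ (n + 1) * log u ^ r‖ ≤ u * |log u| ^ r := by
        rw [norm_mul, norm_pow, norm_pow, Real.norm_of_nonneg hu0.le, Real.norm_eq_abs, pow_succ]
        gcongr
        exact mul_le_of_le_one_left hu0.le (pow_le_one₀ hu0.le hu1)
    _ ≤ u * (((r : ℝ) + 1) ^ r * u ^ (-(r / (r + 1)) : ℝ)) := by
        gcongr; exact abs_log_pow_le_rpow r hu0 hu1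
    _ = ((r : ℝ) + 1) ^ r * u ^ (1 - (r / (r + 1)) : ℝ) := by
        rw [sub_eq_add_neg, rpow_add hu0, rpow_one]; ring

lemma integral_pow_mul_log_pow_succ (n r : ℕ) {T : ℝ} (hT : 0 < T) (hT1 : T ≤ 1) :
    ∫ u in Ioc 0 T, u ^ n * log u ^ (r + 1) =
      (T ^ (n + 1) * log T ^ (r + 1) - (r + 1) * ∫ u in Ioc 0 T, u ^ n * log u ^ r) / (n + 1) := by
  have hderiv : ∀ x, 0 < x → HasDerivAt (fun u => u ^ (n + 1) * log u ^ (r + 1))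
      ((n + 1) * (x ^ n * log x ^ (r + 1)) + (r + 1) * (x ^ n * log x ^ r)) x := by
    intro x hx
    refine ((hasDerivAt_pow (n + 1) x).mul ((hasDerivAt_log hx.ne').fun_pow (r + 1))).congr_deriv ?_
    rw [Nat.add_sub_cancel, Nat.add_sub_cancel]
    field_simp
    push_cast
    ring
  have hint₁ := integrableOn_pow_mul_log_pow n (r + 1) hT1
  have hint₀ := integrableOn_pow_mul_log_pow n r hT1
  have hftc := intervalIntegral.integral_eq_sub_of_hasDerivAt_of_tendsto hT
    (fun x hx => hderiv x hx.1)
    ((intervalIntegrable_iff_integrableOn_Ioc_of_le hT.le).2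
      ((hint₁.const_mul _).add (hint₀.const_mul _)))
    (by simpa using tendsto_pow_succ_mul_log_pow_nhdsGT_zero n (r + 1))
    ((hderiv T hT).continuousAt.tendsto.mono_left nhdsWithin_le_nhds)
  rw [intervalIntegral.integral_of_le hT.le, integral_add (hint₁.const_mul _) (hint₀.const_mul _),
    integral_const_mul, integral_const_mul, sub_zero] at hftc
  rw [eq_div_iff (by positivity)]
  linarith

lemma integral_pow_mul_log_pow (n r : ℕ) {T : ℝ} (hT : 0 < T) (hT1 : T ≤ 1) :
    ∫ u in Ioc 0 T, u ^ n * log u ^ r = T ^ (n + 1) * logMomentPoly (n + 1) r (log T) := by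
  induction r with
  | zero =>
    rw [logMomentPoly_zero, ← intervalIntegral.integral_of_le hT.le]
    simp only [pow_zero, mul_one, integral_pow, zero_pow n.succ_ne_zero, sub_zero]
    ring
  | succ r ih =>
    rw [integral_pow_mul_log_pow_succ n r hT hT1, ih, logMomentPoly_succ (by positivity)]
    ring

lemma hasSum_geometric_inv_add {a b : ℝ} (h : |b| < |a|) :
    HasSum (fun n => (-b / a) ^ n / a) (a + b)⁻¹ := by
  have ha : a ≠ 0 := abs_pos.1 ((abs_nonneg b).trans_lt h)
  have hq : |-b / a| < 1 := by rwa [abs_div, abs_neg, div_lt_one (abs_pos.2 ha)]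
  have hsum : (1 - -b / a)⁻¹ / a = (a + b)⁻¹ := by
    rw [neg_div, sub_neg_eq_add, one_add_div ha, inv_div, div_div_cancel_left' ha]
  simpa only [hsum] using (hasSum_geometric_of_abs_lt_one hq).div_const a

lemma summable_pow_succ_div_succ_pow (s : ℕ) {z : ℝ} (hz : |z| < 1) :
    Summable fun n : ℕ => z ^ (n + 1) / ((n : ℝ) + 1) ^ s := by
  refine Summable.of_norm_bounded (summable_geometric_of_lt_one (abs_nonneg z) hz) fun n => ?_
  rw [norm_div, norm_pow, norm_pow, Real.norm_eq_abs, Real.norm_of_nonneg (by positivity)]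
  calc |z| ^ (n + 1) / ((n : ℝ) + 1) ^ s ≤ |z| ^ (n + 1) :=
        div_le_self (by positivity) (one_le_pow₀ (by simp))
    _ ≤ |z| ^ n := pow_le_pow_of_le_one (abs_nonneg z) hz.le n.le_succ

lemma hasSum_integral_log_pow_div_linear (r : ℕ) {a₁ a₂ T : ℝ} (ha : |a₂| < a₁) (hT1 : T ≤ 1) :
    HasSum (fun n => (-a₂ / a₁) ^ n / a₁ * ∫ u in Ioc 0 T, u ^ n * log u ^ r)
      (∫ u in Ioc 0 T, log u ^ r / (a₁ + a₂ * u)) := by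
  have ha₁ : 0 < a₁ := (abs_nonneg a₂).trans_lt ha
  set q := |a₂| / a₁
  have hq : q < 1 := (div_lt_one ha₁).2 ha
  have hbound_sum : ∀ u, HasSum (fun n => q ^ n / a₁ * |log u| ^ r) ((1 - q)⁻¹ / a₁ * |log u| ^ r) :=
    fun u => ((hasSum_geometric_of_lt_one (by positivity) hq).div_const a₁).mul_right _
  simp_rw [← integral_const_mul]
  refine hasSum_integral_of_dominated_convergence (fun n u => q ^ n / a₁ * |log u| ^ r)
    (fun n => ((integrableOn_pow_mul_log_pow n r hT1).const_mul _).aestronglyMeasurable)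
    (fun n => ?_) (.of_forall fun u => (hbound_sum u).summable) ?_ ?_
  · refine (ae_restrict_iff' measurableSet_Ioc).2 (.of_forall fun u ⟨hu0, huT⟩ => ?_)
    simp only [norm_mul, norm_div, norm_pow, norm_neg, Real.norm_of_nonneg hu0.le,
      Real.norm_of_nonneg ha₁.le, Real.norm_eq_abs]
    exact mul_le_mul_of_nonneg_left
      (mul_le_of_le_one_left (by positivity) (pow_le_one₀ hu0.le (huT.trans hT1))) (by positivity)
  · simp_rw [(hbound_sum _).tsum_eq]
    simpa [IntegrableOn] using ((integrableOn_pow_mul_log_pow 0 r hT1).norm.const_mul _)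
  · refine (ae_restrict_iff' measurableSet_Ioc).2 (.of_forall fun u ⟨hu0, huT⟩ => ?_)
    have hu : |a₂ * u| < |a₁| := by
      rw [abs_mul, abs_of_pos hu0, abs_of_pos ha₁]
      calc |a₂| * u ≤ |a₂| * 1 := by gcongr; exact huT.trans hT1
        _ < a₁ := by rwa [mul_one]
    have hterm : (fun n => log u ^ r * ((-(a₂ * u) / a₁) ^ n / a₁)) =
        fun n => (-a₂ / a₁) ^ n / a₁ * (u ^ n * log u ^ r) := by
      funext n; ring
    simpa only [hterm, ← div_eq_mul_inv] using (hasSum_geometric_inv_add hu).mul_left (log u ^ r)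

/-- The identity (log) in the proof of Appendix Lemma 8.4:
`∫_0^T (log u)^r/(a₁+a₂u) du
  = (1/a₂) Σ_{i=0}^r (-1)^{i+1} (r!/(r-i)!) (log T)^{r-i} Li_{i+1}(-a₂T/a₁)`,
with the polylogarithm written as an absolutely convergent series. -/
theorem integral_log_pow_div_linear_upto (r : ℕ) (a₁ a₂ T : ℝ)
    (ha₂ : 0 < a₂) (ha : a₂ < a₁) (hT : 0 < T) (hT1 : T ≤ 1) :
    ∫ u in Set.Ioc (0:ℝ) T, (Real.log u) ^ r / (a₁ + a₂ * u) =
      (1 / a₂) * ∑ i ∈ Finset.range (r + 1),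
        (-1) ^ (i + 1) * ((r.factorial : ℝ) / ((r - i).factorial : ℝ)) *
          (Real.log T) ^ (r - i) *
          ∑' n : ℕ, (-a₂ * T / a₁) ^ (n + 1) / ((n : ℝ) + 1) ^ (i + 1) := by
  have ha₁ : 0 < a₁ := ha₂.trans ha
  have hz : |-a₂ * T / a₁| < 1 := by
    rw [abs_div, abs_mul, abs_neg, abs_of_pos ha₂, abs_of_pos hT, abs_of_pos ha₁, div_lt_one ha₁]
    exact (mul_le_of_le_one_right ha₂.le hT1).trans_lt ha
  refine (hasSum_integral_log_pow_div_linear r (by rwa [abs_of_pos ha₂]) hT1).unique ?_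
  have hterm : ∀ n : ℕ, (-a₂ / a₁) ^ n / a₁ * ∫ u in Ioc 0 T, u ^ n * log u ^ r =
      ∑ i ∈ range (r + 1), 1 / a₂ * ((-1) ^ (i + 1) * ((r ! : ℝ) / (r - i)!) * log T ^ (r - i)) *
        ((-a₂ * T / a₁) ^ (n + 1) / ((n : ℝ) + 1) ^ (i + 1)) := by
    intro n
    rw [integral_pow_mul_log_pow n r hT hT1, logMomentPoly, mul_sum, mul_sum]
    refine sum_congr rfl fun i _ => ?_
    rw [show -a₂ * T / a₁ = -a₂ / a₁ * T by ring, mul_pow, pow_succ (-a₂ / a₁), pow_succ (-1 : ℝ)]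
    field_simp
  rw [funext hterm, mul_sum]
  simp_rw [← mul_assoc]
  exact hasSum_sum fun i _ => (summable_pow_succ_div_succ_pow (i + 1) hz).hasSum.mul_left _
end

section
/- Let x₁, x₂ be real numbers and let u, a₁, a₂ ∈ ℂ, and set P = 1 + u and Q = a₁ + a₂·u; assume P ≠ 0 and Q ≠ 0. Define B₁(x) = x − 1/2 and B₂(x) = x² − x + 1/6. Then there exist δ > 0 and a function F : ℂ → ℂ which is analytic at 0, satisfies F(t) = t² · exp(((1−x₁)·P + (1−x₂)·Q)·t) / ((1 − exp(P·t))·(1 − exp(Q·t))) for all t with 0 < |t| < δ, satisfies F(0) = 1/(P·Q), and whose second Taylor coefficient at 0 satisfies (1/2)·F''(0) = (P/Q)·B₂(x₁)/2 + B₁(x₁)·B₁(x₂) + (Q/P)·B₂(x₂)/2. -/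
/-!
With `φ z = (exp z - 1) / z` (that is, `dslope exp 0`), an entire function with `φ 0 = 1`, one
has `1 - exp (w t) = -w t φ (w t)`, so the double pole cancels:
`t² g(t, tu) = exp (c t) / (P Q φ (P t) φ (Q t))` with `c = (1 - x₁) P + (1 - x₂) Q`, which is
analytic at `0` with value `1 / (P Q)`. Its second Taylor coefficient comes from the Leibniz rule
applied to `F · φ (P ·) φ (Q ·) = exp (c ·) / (P Q)` up to order two, using
`φ⁽ⁿ⁾ 0 = 1 / (n + 1)`, which is the Leibniz rule again, applied to `z φ z = exp z - 1`.
-/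

open Complex Filter Topology

theorem Differentiable.dslope {E : Type*} [NormedAddCommGroup E] [NormedSpace ℂ E]
    [CompleteSpace E] {f : ℂ → E} (hf : Differentiable ℂ f) (a : ℂ) :
    Differentiable ℂ (dslope f a) :=
  differentiableOn_univ.1 <| (differentiableOn_dslope univ_mem).2 hf.differentiableOn

theorem iteratedDeriv_succ_eq_mul_iteratedDeriv_dslope {f : ℂ → ℂ} (hf : Differentiable ℂ f)
    (n : ℕ) : iteratedDeriv (n + 1) f 0 = (n + 1) * iteratedDeriv n (dslope f 0) 0 := by
  have hf_eq : f = fun z => f 0 + z * dslope f 0 z := by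
    funext z; simpa [sub_eq_iff_eq_add'] using (sub_smul_dslope f 0 z).symm
  conv_lhs => rw [hf_eq]
  rw [iteratedDeriv_const_add n.succ_pos,
    iteratedDeriv_fun_mul contDiffAt_fun_id (hf.dslope 0).contDiff.contDiffAt]
  simp [iteratedDeriv_fun_id_zero]

theorem differentiable_dslope_exp_comp_mul (w : ℂ) :
    Differentiable ℂ fun t => dslope exp 0 (w * t) :=
  (differentiable_exp.dslope 0).comp (differentiable_id.const_mul w)

theorem iteratedDeriv_dslope_exp_comp_mul (w : ℂ) (n : ℕ) :
    iteratedDeriv n (fun t => dslope exp 0 (w * t)) 0 = w ^ n / (n + 1) := by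
  have h := iteratedDeriv_succ_eq_mul_iteratedDeriv_dslope differentiable_exp n
  rw [iteratedDeriv_eq_iterate, iter_deriv_exp, exp_zero] at h
  rw [iteratedDeriv_comp_const_mul (differentiable_exp.dslope 0).contDiff]
  beta_reduce
  rw [mul_zero, eq_div_iff (Nat.cast_add_one_ne_zero n)]
  linear_combination -w ^ n * h

noncomputable def expSlopeProd (P Q t : ℂ) : ℂ := dslope exp 0 (P * t) * dslope exp 0 (Q * t)

theorem differentiable_expSlopeProd (P Q : ℂ) : Differentiable ℂ (expSlopeProd P Q) :=
  (differentiable_dslope_exp_comp_mul P).mul (differentiable_dslope_exp_comp_mul Q)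

theorem iteratedDeriv_expSlopeProd_zero (P Q : ℂ) (n : ℕ) :
    iteratedDeriv n (expSlopeProd P Q) 0 = ∑ i ∈ Finset.range (n + 1),
      n.choose i * (P ^ i / (i + 1)) * (Q ^ (n - i) / ((n - i : ℕ) + 1)) := by
  change iteratedDeriv n (fun t => dslope exp 0 (P * t) * dslope exp 0 (Q * t)) 0 = _
  rw [iteratedDeriv_fun_mul (differentiable_dslope_exp_comp_mul P).contDiff.contDiffAt
    (differentiable_dslope_exp_comp_mul Q).contDiff.contDiffAt]
  simp [iteratedDeriv_dslope_exp_comp_mul]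

theorem expSlopeProd_zero (P Q : ℂ) : expSlopeProd P Q 0 = 1 := by
  simpa using iteratedDeriv_expSlopeProd_zero P Q 0

theorem sq_div_one_sub_exp_mul_one_sub_exp (P Q : ℂ) {t : ℂ} (ht : t ≠ 0) :
    t ^ 2 / ((1 - exp (P * t)) * (1 - exp (Q * t))) = 1 / (P * Q * expSlopeProd P Q t) := by
  have one_sub_exp (w : ℂ) : 1 - exp (w * t) = -(w * t) * dslope exp 0 (w * t) := by
    have h := sub_smul_dslope exp 0 (w * t)
    simp only [sub_zero, smul_eq_mul, exp_zero] at h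
    linear_combination h
  rw [one_sub_exp P, one_sub_exp Q, expSlopeProd,
    show -(P * t) * dslope exp 0 (P * t) * (-(Q * t) * dslope exp 0 (Q * t)) =
      t ^ 2 * (P * Q * (dslope exp 0 (P * t) * dslope exp 0 (Q * t))) by ring,
    div_mul_cancel_left₀ (pow_ne_zero 2 ht), one_div]

theorem analyticAt_exp_div_expSlopeProd (c P Q : ℂ) (hP : P ≠ 0) (hQ : Q ≠ 0) :
    AnalyticAt ℂ (fun t => exp (c * t) / (P * Q * expSlopeProd P Q t)) 0 :=
  (analyticAt_const.mul analyticAt_id).cexp.div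
    (analyticAt_const.mul ((differentiable_expSlopeProd P Q).analyticAt 0))
    (by simp [expSlopeProd_zero, hP, hQ])

theorem mul_mul_iteratedDeriv_two_exp_div_expSlopeProd (c P Q : ℂ) (hP : P ≠ 0) (hQ : Q ≠ 0) :
    P * Q * iteratedDeriv 2 (fun t => exp (c * t) / (P * Q * expSlopeProd P Q t)) 0 =
      c ^ 2 - (P + Q) * c + (P ^ 2 + Q ^ 2) / 6 + P * Q / 2 := by
  set F := fun t => exp (c * t) / (P * Q * expSlopeProd P Q t)
  have hF (n : ℕ) : ContDiffAt ℂ n F 0 := (analyticAt_exp_div_expSlopeProd c P Q hP hQ).contDiffAt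
  have hG (n : ℕ) : ContDiffAt ℂ n (expSlopeProd P Q) 0 :=
    (differentiable_expSlopeProd P Q).contDiff.contDiffAt
  have hFG : F * expSlopeProd P Q =ᶠ[𝓝 0] fun t => exp (c * t) / (P * Q) := by
    filter_upwards [(hG 0).continuousAt.eventually_ne (y := 0) (by simp [expSlopeProd_zero])]
      with t ht
    simp only [Pi.mul_apply, F]
    field_simp
  have leibniz (n : ℕ) : ∑ i ∈ Finset.range (n + 1),
      n.choose i * iteratedDeriv i F 0 * iteratedDeriv (n - i) (expSlopeProd P Q) 0 =
        c ^ n / (P * Q) := by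
    rw [← iteratedDeriv_mul (hF n) (hG n), hFG.iteratedDeriv_eq, iteratedDeriv_div_const,
      iteratedDeriv_cexp_const_mul]
    simp
  have hF0 : F 0 = 1 / (P * Q) := by simp [F, expSlopeProd_zero]
  have e1 : F 0 * ((P + Q) / 2) + deriv F 0 = c / (P * Q) := by
    have h := leibniz 1
    simp [Finset.sum_range_succ, iteratedDeriv_expSlopeProd_zero] at h
    linear_combination h
  have e2 : F 0 * ((P ^ 2 + Q ^ 2) / 3 + P * Q / 2) + (P + Q) * deriv F 0 +
      iteratedDeriv 2 F 0 = c ^ 2 / (P * Q) := by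
    have h := leibniz 2
    simp [Finset.sum_range_succ, iteratedDeriv_expSlopeProd_zero] at h
    linear_combination h
  rw [hF0] at e1 e2
  field_simp at e1 e2
  linear_combination (e2 - 3 * (P + Q) * e1) / 6

theorem laurent_constant_term_bernoulli_general
    (x₁ x₂ : ℝ) (P Q : ℂ)
    (hP0 : P ≠ 0) (hQ0 : Q ≠ 0) :
    ∃ δ > (0:ℝ), ∃ F : ℂ → ℂ, AnalyticAt ℂ F 0 ∧
      (∀ t : ℂ, 0 < ‖t‖ → ‖t‖ < δ →
        F t = t ^ 2 * Complex.exp (((1 - (x₁ : ℂ)) * P + (1 - (x₂ : ℂ)) * Q) * t) /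
          ((1 - Complex.exp (P * t)) * (1 - Complex.exp (Q * t)))) ∧
      F 0 = 1 / (P * Q) ∧
      (1 / 2) * iteratedDeriv 2 F 0 =
        (P / Q) * ((x₁ : ℂ) ^ 2 - (x₁ : ℂ) + 1 / 6) / 2 +
          ((x₁ : ℂ) - 1 / 2) * ((x₂ : ℂ) - 1 / 2) +
          (Q / P) * ((x₂ : ℂ) ^ 2 - (x₂ : ℂ) + 1 / 6) / 2 := by
  let c : ℂ := (1 - (x₁ : ℂ)) * P + (1 - (x₂ : ℂ)) * Q
  -- Where `exp (P t) = 1` or `exp (Q t) = 1` with `t ≠ 0`, both sides take the junk value `0`,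
  -- so the identity holds on the whole punctured plane and any radius works.
  refine ⟨1, one_pos, fun t => exp (c * t) / (P * Q * expSlopeProd P Q t),
    analyticAt_exp_div_expSlopeProd c P Q hP0 hQ0, fun t ht _ => ?_,
    by simp [expSlopeProd_zero], ?_⟩
  · rw [mul_div_right_comm, sq_div_one_sub_exp_mul_one_sub_exp P Q (norm_pos_iff.1 ht),
      one_div_mul_eq_div]
  · have h := mul_mul_iteratedDeriv_two_exp_div_expSlopeProd c P Q hP0 hQ0
    simp only [c] at h ⊢
    field_simp
    linear_combination 12 * h

/-- The constant term of the Laurent expansion at `t = 0` of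
`g(t,tu) = e^{((1-x₁)P+(1-x₂)Q)t}/((1-e^{Pt})(1-e^{Qt}))` (with `P = 1+u`,
`Q = a₁+a₂u`) equals `(P/Q)B₂(x₁)/2 + B₁(x₁)B₁(x₂) + (Q/P)B₂(x₂)/2`,
expressed via the analytic extension of `t² · g(t,tu)` across `t = 0`. -/
theorem laurent_constant_term_bernoulli
    (x₁ x₂ : ℝ) (u a₁ a₂ : ℂ) (P Q : ℂ) (hP : P = 1 + u) (hQ : Q = a₁ + a₂ * u)
    (hP0 : P ≠ 0) (hQ0 : Q ≠ 0) :
    ∃ δ > (0:ℝ), ∃ F : ℂ → ℂ, AnalyticAt ℂ F 0 ∧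
      (∀ t : ℂ, 0 < ‖t‖ → ‖t‖ < δ →
        F t = t ^ 2 * Complex.exp (((1 - (x₁ : ℂ)) * P + (1 - (x₂ : ℂ)) * Q) * t) /
          ((1 - Complex.exp (P * t)) * (1 - Complex.exp (Q * t)))) ∧
      F 0 = 1 / (P * Q) ∧
      (1 / 2) * iteratedDeriv 2 F 0 =
        (P / Q) * ((x₁ : ℂ) ^ 2 - (x₁ : ℂ) + 1 / 6) / 2 +
          ((x₁ : ℂ) - 1 / 2) * ((x₂ : ℂ) - 1 / 2) +
          (Q / P) * ((x₂ : ℂ) ^ 2 - (x₂ : ℂ) + 1 / 6) / 2 :=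
  laurent_constant_term_bernoulli_general x₁ x₂ P Q hP0 hQ0
end
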